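/- Let 𝒢 = (G_1, G_2, …) be a sequence of nonsplit communication graphs on n ≥ 1 nodes. Then some node is a broadcaster in the product G_1 ∘ G_2 ∘ ⋯ ∘ G_t for t = ⌈log₂ n⌉; in particular, the dynamic radius of any sequence of nonsplit communication graphs on n nodes is at most ⌈log₂ n⌉ (taking the empty product, with only self-loops, when n = 1). -/
import Mathlib


/-- `prodUpTo G t` is the product graph `G_1 ∘ G_2 ∘ ⋯ ∘ G_t`, where `G_r` is `G (r-1)`
(0-indexed sequence); the empty product (`t = 0`) has exactly the self-loops. -/
def prodUpTo {n : ℕ} (G : ℕ → Fin n → Fin n → Prop) : ℕ → Fin n → Fin n → Prop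
  | 0, i, j => i = j
  | t + 1, i, j => ∃ k, prodUpTo G t i k ∧ G t k j

lemma half_cover {n : ℕ} (H : Fin n → Fin n → Prop)
    (hns : ∀ i j, ∃ k, H k i ∧ H k j) :
    ∀ J : Finset (Fin n), ∃ K : Finset (Fin n),
      2 * K.card ≤ J.card + 1 ∧ ∀ j ∈ J, ∃ k ∈ K, H k j := by
  intro J
  induction J using Finset.strongInduction with
  | _ J ih =>
    rcases J.eq_empty_or_nonempty with rfl | ⟨j1, hj1⟩
    · exact ⟨∅, by simp⟩
    rcases (J.erase j1).eq_empty_or_nonempty with he | ⟨j2, hj2⟩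
    · obtain ⟨k, hk, -⟩ := hns j1 j1
      have hJ : J = {j1} := by
        rcases (Finset.erase_eq_empty_iff J j1).mp he with h | h
        · exact absurd (h ▸ hj1) (Finset.notMem_empty j1)
        · exact h
      refine ⟨{k}, by simp [hJ], ?_⟩
      intro j hj
      rw [hJ, Finset.mem_singleton] at hj
      exact ⟨k, Finset.mem_singleton_self k, hj ▸ hk⟩
    · obtain ⟨k, hk1, hk2⟩ := hns j1 j2
      have hj2J : j2 ∈ J := Finset.mem_of_mem_erase hj2
      have hss : (J.erase j1).erase j2 ⊂ J :=
        (Finset.erase_ssubset hj2).trans_subset (Finset.erase_subset _ _)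
      obtain ⟨K, hcard, hcov⟩ := ih _ hss
      have hc2 : ((J.erase j1).erase j2).card = J.card - 2 := by
        rw [Finset.card_erase_of_mem hj2, Finset.card_erase_of_mem hj1]; omega
      have h2le : 2 ≤ J.card := by
        have := Finset.card_erase_of_mem hj1
        have hpos : 0 < (J.erase j1).card := Finset.card_pos.mpr ⟨j2, hj2⟩
        omega
      refine ⟨insert k K, ?_, ?_⟩
      · have := Finset.card_insert_le k K
        omega
      · intro j hj
        by_cases h1 : j = j1
        · exact ⟨k, Finset.mem_insert_self k K, h1 ▸ hk1⟩
        by_cases h2 : j = j2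
        · exact ⟨k, Finset.mem_insert_self k K, h2 ▸ hk2⟩
        · obtain ⟨k', hk', hH⟩ := hcov j (by
            exact Finset.mem_erase.mpr ⟨h2, Finset.mem_erase.mpr ⟨h1, hj⟩⟩)
          exact ⟨k', Finset.mem_insert_of_mem hk', hH⟩

lemma main_cover {n : ℕ} (hn : 1 ≤ n) (G : ℕ → Fin n → Fin n → Prop)
    (hnonsplit : ∀ t i j, ∃ k, G t k i ∧ G t k j) :
    ∀ t (J : Finset (Fin n)), J.card ≤ 2 ^ t →
      ∃ i, ∀ j ∈ J, prodUpTo G t i j := by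
  intro t
  induction t with
  | zero =>
    intro J hJ
    rcases J.eq_empty_or_nonempty with rfl | ⟨j, hj⟩
    · exact ⟨⟨0, hn⟩, by simp⟩
    · refine ⟨j, fun j' hj' => ?_⟩
      have : j = j' := Finset.card_le_one.mp (by simpa using hJ) j hj j' hj'
      exact this
  | succ t ih =>
    intro J hJ
    obtain ⟨K, hcard, hcov⟩ := half_cover (G t) (hnonsplit t) J
    have h2 : 2 ^ (t + 1) = 2 * 2 ^ t := by ring
    obtain ⟨i, hi⟩ := ih K (by omega)
    refine ⟨i, fun j hj => ?_⟩
    obtain ⟨k, hkK, hH⟩ := hcov j hj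
    exact ⟨k, hi k hkK, hH⟩

/-- For any sequence of nonsplit communication graphs on `n ≥ 1` nodes, some node is a
broadcaster in the product of the first `⌈log₂ n⌉` graphs; hence the dynamic radius of such a
sequence is at most `⌈log₂ n⌉`. -/
theorem nonsplit_dynamic_radius_log (n : ℕ) (hn : 1 ≤ n)
    (G : ℕ → Fin n → Fin n → Prop)
    (hself : ∀ t i, G t i i)
    (hnonsplit : ∀ t i j, ∃ k, G t k i ∧ G t k j) :
    ∃ i : Fin n, ∀ j : Fin n, prodUpTo G ⌈Real.logb 2 (n : ℝ)⌉₊ i j := by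
  set t := ⌈Real.logb 2 (n : ℝ)⌉₊ with ht
  have hle : (n : ℝ) ≤ 2 ^ t := by
    have hn0 : (0 : ℝ) < n := by exact_mod_cast hn
    have h1 : Real.logb 2 (n : ℝ) ≤ t := Nat.le_ceil _
    have h2 : (n : ℝ) = (2 : ℝ) ^ Real.logb 2 (n : ℝ) :=
      (Real.rpow_logb (by norm_num) (by norm_num) hn0).symm
    calc (n : ℝ) = (2 : ℝ) ^ Real.logb 2 (n : ℝ) := h2
      _ ≤ (2 : ℝ) ^ (t : ℝ) := Real.rpow_le_rpow_of_exponent_le (by norm_num) h1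
      _ = 2 ^ t := by rw [Real.rpow_natCast]
  have hle' : n ≤ 2 ^ t := by exact_mod_cast hle
  obtain ⟨i, hi⟩ := main_cover hn G hnonsplit t Finset.univ
    (by simpa using hle')
  exact ⟨i, fun j => hi j (Finset.mem_univ j)⟩
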